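/- Let G be a self-complementary graph with an antimorphism that is the product of exactly two cycles, one of which has length 4. Then either G contains C_5 as an induced subgraph, or G has a skew partition, or G has a symmetric partition. -/

import Mathlib

def IsAntimorphism {V : Type*} (G : SimpleGraph V) (τ : Equiv.Perm V) : Prop :=
  ∀ a b : V, a ≠ b → (G.Adj a b ↔ ¬ G.Adj (τ a) (τ b))

def IsSymmetricPartition {V : Type*} (G : SimpleGraph V) (A B C D : Set V) : Prop :=
  (A.Nonempty ∧ B.Nonempty ∧ C.Nonempty ∧ D.Nonempty ∧
   Disjoint A B ∧ Disjoint A C ∧ Disjoint A D ∧ Disjoint B C ∧ Disjoint B D ∧ Disjoint C D ∧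
   (∀ x ∈ A, ∀ y ∈ B, G.Adj x y) ∧ (∀ x ∈ C, ∀ y ∈ D, G.Adj x y) ∧
   (∀ x ∈ A, ∀ y ∈ D, ¬ G.Adj x y) ∧ (∀ x ∈ B, ∀ y ∈ C, ¬ G.Adj x y)) ∧
  A ∪ B ∪ C ∪ D = Set.univ

def IsSkewPartition {V : Type*} (G : SimpleGraph V) (A B C D : Set V) : Prop :=
  (A.Nonempty ∧ B.Nonempty ∧ C.Nonempty ∧ D.Nonempty ∧
   Disjoint A B ∧ Disjoint A C ∧ Disjoint A D ∧ Disjoint B C ∧ Disjoint B D ∧ Disjoint C D ∧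
   (∀ x ∈ A, ∀ y ∈ B, ¬ G.Adj x y) ∧ (∀ x ∈ C, ∀ y ∈ D, G.Adj x y)) ∧
  A ∪ B ∪ C ∪ D = Set.univ

/-- `G` contains an induced cycle on 5 vertices. -/
def HasInducedC5 {V : Type*} (G : SimpleGraph V) : Prop :=
  ∃ v : Fin 5 → V, Function.Injective v ∧
    ∀ i j : Fin 5, i ≠ j → (G.Adj (v i) (v j) ↔ (j = i + 1 ∨ i = j + 1))

/-!
Write `τ = (a b c d)(e₀ … e_{m-1})`. Since `τ ^ k` maps `G` onto `G` or onto its complement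
according to the parity of `k`, and `τ ^ m` fixes `e₀` and `e₁`, a cycle of length `m ≠ 1` has
even length. If `m = 1` there are five vertices, and a case analysis on `a ~ c` and `a ~ e₀`
gives a skew partition or an induced `C₅`.

Otherwise put `α i := (a ~ eᵢ)`. The neighbourhoods of `b = τ a`, `c = τ² a`, `d = τ³ a` on the
cycle are `¬ α (i - 1)`, `α (i - 2)`, `¬ α (i - 3)`, and `α` has period 4. If `α (i₀ + 2) = α i₀`
for some `i₀`, then `α` is constant on the parity class of `i₀`, and `{a, c}`, `{b, d}` with the
two parity classes form a skew partition. Otherwise `α (i + 2) = ¬ α i`, so each cycle vertex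
is adjacent to exactly one of `b`, `d` (and to exactly one of `c`, `a`), which gives a symmetric
partition.
-/

open Function

theorem ZMod.even_or_odd {m : ℕ} (j : ZMod m) : Even j ∨ Odd j := by
  rw [← ZMod.intCast_zmod_cast j]
  exact (Int.even_or_odd _).imp Even.intCast Odd.intCast

theorem ZMod.not_even_one_of_even {m : ℕ} (hm : Even m) : ¬ Even (1 : ZMod m) := by
  intro h
  obtain ⟨r, hr⟩ := h.map (ZMod.castHom (even_iff_two_dvd.mp hm) (ZMod 2))
  rw [map_one] at hr
  revert r
  decide

theorem Function.Periodic.eq_of_even_sub {m : ℕ} {β : Type*} {f : ZMod m → β}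
    (hf : Periodic f 4) {i₀ : ZMod m} (h₀ : f (i₀ + 2) = f i₀) {i : ZMod m}
    (hi : Even (i - i₀)) : f i = f i₀ := by
  obtain ⟨r, hr⟩ := hi
  rw [sub_eq_iff_eq_add', ← ZMod.intCast_zmod_cast r] at hr
  rcases Int.even_or_odd (ZMod.cast r : ℤ) with ⟨t, ht⟩ | ⟨t, ht⟩
  · have hi : i = i₀ + (t : ZMod m) * 4 := by
      rw [hr, ht]
      push_cast
      ring
    rw [hi, hf.int_mul t i₀]
  · have hi : i = i₀ + 2 + (t : ZMod m) * 4 := by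
      rw [hr, ht]
      push_cast
      ring
    rw [hi, hf.int_mul t, h₀]

section Partitions

variable {V : Type*} {G : SimpleGraph V}

theorem hasInducedC5_of_adj {v₀ v₁ v₂ v₃ v₄ : V} (hnodup : [v₀, v₁, v₂, v₃, v₄].Nodup)
    (h₀₁ : G.Adj v₀ v₁) (h₁₂ : G.Adj v₁ v₂) (h₂₃ : G.Adj v₂ v₃) (h₃₄ : G.Adj v₃ v₄)
    (h₄₀ : G.Adj v₄ v₀) (h₀₂ : ¬ G.Adj v₀ v₂) (h₁₃ : ¬ G.Adj v₁ v₃) (h₂₄ : ¬ G.Adj v₂ v₄)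
    (h₃₀ : ¬ G.Adj v₃ v₀) (h₄₁ : ¬ G.Adj v₄ v₁) :
    HasInducedC5 G := by
  refine ⟨![v₀, v₁, v₂, v₃, v₄], List.nodup_ofFn.mp hnodup, ?_⟩
  intro i j hij
  fin_cases i <;> fin_cases j <;> simp_all [G.adj_comm]

theorem isSymmetricPartition_of_adj_iff_not_adj {v z : V} (hvz : v ≠ z)
    (hv : ∃ x ≠ z, G.Adj v x) (hz : ∃ x ≠ v, G.Adj z x)
    (hxor : ∀ x, x ≠ v → x ≠ z → (G.Adj v x ↔ ¬ G.Adj z x)) :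
    IsSymmetricPartition G {x | x ≠ z ∧ G.Adj v x} {v} {x | x ≠ v ∧ G.Adj z x} {z} := by
  obtain ⟨x, hxz, hvx⟩ := hv
  obtain ⟨y, hyv, hzy⟩ := hz
  refine ⟨⟨⟨x, hxz, hvx⟩, ⟨v, rfl⟩, ⟨y, hyv, hzy⟩, ⟨z, rfl⟩,
    ?_, ?_, ?_, ?_, ?_, ?_, ?_, ?_, ?_, ?_⟩, ?_⟩
  · exact Set.disjoint_left.mpr fun x ⟨_, hvx⟩ hxv => G.irrefl (hxv ▸ hvx)
  · exact Set.disjoint_left.mpr fun x ⟨hxz, hvx⟩ ⟨hxv, hzx⟩ => (hxor x hxv hxz).mp hvx hzx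
  · exact Set.disjoint_left.mpr fun x ⟨hxz, _⟩ hx => hxz hx
  · exact Set.disjoint_left.mpr fun x hx ⟨hxv, _⟩ => hxv hx
  · exact Set.disjoint_singleton.mpr hvz
  · exact Set.disjoint_left.mpr fun x ⟨_, hzx⟩ hxz => G.irrefl (hxz ▸ hzx)
  · rintro x ⟨-, hvx⟩ y rfl; exact hvx.symm
  · rintro x ⟨-, hzx⟩ y rfl; exact hzx.symm
  · rintro x ⟨hxz, hvx⟩ y rfl hxy; exact (hxor x (G.ne_of_adj hvx).symm hxz).mp hvx hxy.symm
  · rintro x rfl y ⟨hyv, hzy⟩ hxy; exact (hxor y hyv (G.ne_of_adj hzy).symm).mp hxy hzy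
  · refine Set.eq_univ_of_forall fun x => ?_
    simp only [Set.mem_union, Set.mem_ofPred_eq, Set.mem_singleton_iff]
    by_cases hxv : x = v; · tauto
    by_cases hxz : x = z; · tauto
    have := hxor x hxv hxz
    tauto

theorem isSkewPartition_singletons {u v w z x : V} (hnodup : [u, v, w, z, x].Nodup)
    (huv : ¬ G.Adj u v) (hwz : G.Adj w z) (hwx : G.Adj w x)
    (hcover : ({u, v, w, z, x} : Set V) = Set.univ) :
    IsSkewPartition G {u} {v} {w} {z, x} := by
  simp only [List.nodup_cons, List.mem_cons, List.not_mem_nil, or_false, List.nodup_nil,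
    and_true, not_or] at hnodup
  obtain ⟨⟨huv', huw, huz, hux⟩, ⟨hvw, hvz, hvx⟩, -⟩ := hnodup
  refine ⟨⟨Set.singleton_nonempty u, Set.singleton_nonempty v, Set.singleton_nonempty w,
    Set.insert_nonempty z {x}, ?_, ?_, ?_, ?_, ?_, ?_, ?_, ?_⟩, ?_⟩
  · exact Set.disjoint_singleton.mpr huv'
  · exact Set.disjoint_singleton.mpr huw
  · simp [huz, hux]
  · exact Set.disjoint_singleton.mpr hvw
  · simp [hvz, hvx]
  · simp [hwz.ne, hwx.ne]
  · rintro _ rfl _ rfl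
    exact huv
  · rintro _ rfl _ (rfl | rfl) <;> assumption
  · rw [← hcover]
    grind

theorem isSkewPartition_image {ι : Type*} {e : ι → V} (he : Injective e) {u v w z : V}
    (huw : u ≠ w) (huz : u ≠ z) (hvw : v ≠ w) (hvz : v ≠ z)
    (hdisj : ∀ i, e i ∉ ({u, v, w, z} : Set V))
    (hcover : ∀ x, x ∈ ({u, v, w, z} : Set V) ∨ x ∈ Set.range e)
    {p : ι → Prop} (hp : ∃ i, p i) (hnp : ∃ i, ¬ p i)
    (hB : ∀ i, p i → ¬ G.Adj u (e i) ∧ ¬ G.Adj v (e i))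
    (hD : ∀ i, ¬ p i → G.Adj w (e i) ∧ G.Adj z (e i)) :
    IsSkewPartition G {u, v} (e '' {i | p i}) {w, z} (e '' {i | ¬ p i}) := by
  have hK : ∀ k, e k ∉ ({u, v} : Set V) ∧ e k ∉ ({w, z} : Set V) := fun k => by
    have := hdisj k
    simp only [Set.mem_insert_iff, Set.mem_singleton_iff, not_or] at this ⊢
    tauto
  obtain ⟨i, hi⟩ := hp
  obtain ⟨j, hj⟩ := hnp
  refine ⟨⟨Set.insert_nonempty u {v}, ⟨e i, i, hi, rfl⟩, Set.insert_nonempty w {z},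
    ⟨e j, j, hj, rfl⟩, ?_, ?_, ?_, ?_, ?_, ?_, ?_, ?_⟩, ?_⟩
  · exact Set.disjoint_right.mpr fun _ ⟨k, _, hk⟩ => hk ▸ (hK k).1
  · simp [huw.symm, huz.symm, hvw.symm, hvz.symm]
  · exact Set.disjoint_right.mpr fun _ ⟨k, _, hk⟩ => hk ▸ (hK k).1
  · exact Set.disjoint_left.mpr fun _ ⟨k, _, hk⟩ => hk ▸ (hK k).2
  · exact (Set.disjoint_image_iff he).mpr (Set.disjoint_left.mpr fun _ hk hk' => hk' hk)
  · exact Set.disjoint_right.mpr fun _ ⟨k, _, hk⟩ => hk ▸ (hK k).2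
  · rintro _ (rfl | rfl) _ ⟨k, hk, rfl⟩
    exacts [(hB k hk).1, (hB k hk).2]
  · rintro _ (rfl | rfl) _ ⟨k, hk, rfl⟩
    exacts [(hD k hk).1, (hD k hk).2]
  · refine Set.eq_univ_of_forall fun x => ?_
    rcases hcover x with hx | ⟨k, rfl⟩
    · simp only [Set.mem_insert_iff, Set.mem_singleton_iff] at hx
      simp only [Set.mem_union, Set.mem_insert_iff, Set.mem_singleton_iff]
      tauto
    · by_cases hk : p k
      · exact Or.inl (Or.inl (Or.inr ⟨k, hk, rfl⟩))
      · exact Or.inr ⟨k, hk, rfl⟩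

end Partitions

section CycleProfile

variable {V : Type*} {G : SimpleGraph V} {a b c d : V} {m : ℕ} {e : ZMod m → V}

theorem exists_isSkewPartition_of_adj_const_on_even (habcd : [a, b, c, d].Nodup)
    (hm : Even m) (he : Injective e) (hdisj : ∀ i, e i ∉ ({a, b, c, d} : Set V))
    (hcover : ∀ v : V, v ∈ ({a, b, c, d} : Set V) ∨ v ∈ Set.range e)
    (hb : ∀ i, G.Adj b (e i) ↔ ¬ G.Adj a (e (i - 1)))
    (hc : ∀ i, G.Adj c (e i) ↔ G.Adj a (e (i - 2)))
    (hd : ∀ i, G.Adj d (e i) ↔ ¬ G.Adj a (e (i - 3))) {i₀ : ZMod m}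
    (hconst : ∀ i, Even (i - i₀) → (G.Adj a (e i) ↔ G.Adj a (e i₀))) :
    ∃ A B C D : Set V, IsSkewPartition G A B C D := by
  simp only [List.nodup_cons, List.mem_cons, List.not_mem_nil, or_false, List.nodup_nil,
    and_true, not_or] at habcd
  obtain ⟨⟨hab, -, had⟩, ⟨hbc, -⟩, hcd, -⟩ := habcd
  have h2 : Even (2 : ZMod m) := even_two
  have hodd : ∀ i, ¬ Even (i - i₀) → Even (i - 1 - i₀) ∧ Even (i - 3 - i₀) := by
    intro i hi
    have h1 : Even (i - 1 - i₀) := by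
      rw [sub_right_comm]
      exact ((ZMod.even_or_odd _).resolve_left hi).sub_odd odd_one
    refine ⟨h1, ?_⟩
    rw [show i - 3 - i₀ = i - 1 - i₀ - 2 by ring]
    exact h1.sub h2
  have heven : ∀ i, Even (i - i₀) → Even (i - 2 - i₀) := fun i hi => by
    rw [show i - 2 - i₀ = i - i₀ - 2 by ring]
    exact hi.sub h2
  have hodd₀ : ¬ Even (i₀ + 1 - i₀) := by
    rw [add_sub_cancel_left]
    exact ZMod.not_even_one_of_even hm
  by_cases hs : G.Adj a (e i₀)
  · have hK : ({b, d, a, c} : Set V) = {a, b, c, d} := by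
      ext; simp only [Set.mem_insert_iff, Set.mem_singleton_iff]; tauto
    refine ⟨_, _, _, _, isSkewPartition_image he (u := b) (v := d) (w := a) (z := c)
      (p := fun i => ¬ Even (i - i₀)) (Ne.symm hab) hbc (Ne.symm had) (Ne.symm hcd)
      (hK ▸ hdisj) (hK ▸ hcover) ⟨_, hodd₀⟩ ⟨i₀, by simp⟩ ?_ ?_⟩
    · intro i hi
      rw [hb, hd, not_not, not_not, hconst _ (hodd i hi).1, hconst _ (hodd i hi).2]
      exact ⟨hs, hs⟩
    · intro i hi
      rw [not_not] at hi
      rw [hc, hconst _ hi, hconst _ (heven i hi)]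
      exact ⟨hs, hs⟩
  · have hK : ({a, c, b, d} : Set V) = {a, b, c, d} := by
      ext; simp only [Set.mem_insert_iff, Set.mem_singleton_iff]; tauto
    refine ⟨_, _, _, _, isSkewPartition_image he (u := a) (v := c) (w := b) (z := d)
      (p := fun i => Even (i - i₀)) hab had (Ne.symm hbc) hcd
      (hK ▸ hdisj) (hK ▸ hcover) ⟨i₀, by simp⟩ ⟨_, hodd₀⟩ ?_ ?_⟩
    · intro i hi
      rw [hc, hconst _ hi, hconst _ (heven i hi)]
      exact ⟨hs, hs⟩
    · intro i hi
      rw [hb, hd, hconst _ (hodd i hi).1, hconst _ (hodd i hi).2]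
      exact ⟨hs, hs⟩

theorem exists_isSymmetricPartition_of_adj_flip (habcd : [a, b, c, d].Nodup)
    (hab : G.Adj a b ↔ ¬ G.Adj b c) (hbc : G.Adj b c ↔ ¬ G.Adj c d)
    (hcd : G.Adj c d ↔ ¬ G.Adj d a)
    (hcover : ∀ v : V, v ∈ ({a, b, c, d} : Set V) ∨ v ∈ Set.range e)
    (hb : ∀ i, G.Adj b (e i) ↔ ¬ G.Adj a (e (i - 1)))
    (hc : ∀ i, G.Adj c (e i) ↔ G.Adj a (e (i - 2)))
    (hd : ∀ i, G.Adj d (e i) ↔ ¬ G.Adj a (e (i - 3)))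
    (hflip : ∀ i, ¬ (G.Adj a (e (i + 2)) ↔ G.Adj a (e i))) :
    ∃ A B C D : Set V, IsSymmetricPartition G A B C D := by
  simp only [List.nodup_cons, List.mem_cons, List.not_mem_nil, or_false, List.nodup_nil,
    and_true, not_or] at habcd
  obtain ⟨⟨hab', hac', had'⟩, ⟨hbc', hbd'⟩, hcd', -⟩ := habcd
  by_cases P : G.Adj a b
  · have hcdP : G.Adj c d := not_not.mp (mt hbc.mpr (hab.mp P))
    refine ⟨_, _, _, _, isSymmetricPartition_of_adj_iff_not_adj hbd' ⟨a, had', P.symm⟩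
      ⟨c, Ne.symm hbc', hcdP.symm⟩ fun x hxb hxd => ?_⟩
    rcases hcover x with hx | ⟨i, rfl⟩
    · simp only [Set.mem_insert_iff, Set.mem_singleton_iff] at hx
      grind [SimpleGraph.adj_comm]
    · have := hflip (i - 3)
      rw [show i - 3 + 2 = i - 1 by ring] at this
      rw [hb, hd]
      tauto
  · have hbcP : G.Adj b c := not_not.mp (mt hab.mpr P)
    have hdaP : G.Adj d a := not_not.mp (mt hcd.mpr (hbc.mp hbcP))
    refine ⟨_, _, _, _, isSymmetricPartition_of_adj_iff_not_adj (Ne.symm hac')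
      ⟨b, Ne.symm hab', hbcP.symm⟩ ⟨d, Ne.symm hcd', hdaP.symm⟩ fun x hxc hxa => ?_⟩
    rcases hcover x with hx | ⟨i, rfl⟩
    · simp only [Set.mem_insert_iff, Set.mem_singleton_iff] at hx
      grind [SimpleGraph.adj_comm]
    · have := hflip (i - 2)
      rw [sub_add_cancel] at this
      rw [hc]
      tauto

end CycleProfile

theorem Equiv.Perm.pow_apply_eq_add_of_apply_eq_add_one {V : Type*} {τ : Equiv.Perm V}
    {m : ℕ} {e : ZMod m → V} (hec : ∀ i, τ (e i) = e (i + 1)) (k : ℕ) (i : ZMod m) :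
    (τ ^ k) (e i) = e (i + k) := by
  induction k with
  | zero => simp
  | succ k ih =>
    rw [pow_succ', Equiv.Perm.mul_apply, ih, hec, Nat.cast_succ, add_assoc]

namespace IsAntimorphism

variable {V : Type*} {G : SimpleGraph V} {τ : Equiv.Perm V}

theorem adj_pow_iff (hτ : IsAntimorphism G τ) (k : ℕ) {x y : V} (hxy : x ≠ y) :
    G.Adj ((τ ^ k) x) ((τ ^ k) y) ↔ (G.Adj x y ↔ Even k) := by
  induction k with
  | zero => simp
  | succ k ih =>
    have := hτ _ _ ((τ ^ k).injective.ne hxy)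
    rw [pow_succ', Equiv.Perm.mul_apply, Equiv.Perm.mul_apply, Nat.even_add_one]
    tauto

theorem even_of_pow_apply_eq_self (hτ : IsAntimorphism G τ) {k : ℕ} {x y : V} (hxy : x ≠ y)
    (hx : (τ ^ k) x = x) (hy : (τ ^ k) y = y) : Even k := by
  have := hτ.adj_pow_iff k hxy
  rw [hx, hy] at this
  tauto

theorem even_of_cycle (hτ : IsAntimorphism G τ) {m : ℕ} {e : ZMod m → V} (he : Injective e)
    (hec : ∀ i, τ (e i) = e (i + 1)) (hm : m ≠ 1) : Even m := by
  have := ZMod.nontrivial_iff.mpr hm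
  refine hτ.even_of_pow_apply_eq_self (he.ne (zero_ne_one (α := ZMod m))) ?_ ?_ <;>
    simp [Equiv.Perm.pow_apply_eq_add_of_apply_eq_add_one hec]

theorem adj_pow_apply_iff (hτ : IsAntimorphism G τ) {m : ℕ} {e : ZMod m → V}
    (hec : ∀ i, τ (e i) = e (i + 1)) {y : V} (hy : y ∉ Set.range e) (k : ℕ) (i : ZMod m) :
    G.Adj ((τ ^ k) y) (e i) ↔ (G.Adj y (e (i - k)) ↔ Even k) := by
  have := hτ.adj_pow_iff k (x := y) (y := e (i - k)) fun h => hy ⟨_, h.symm⟩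
  rwa [Equiv.Perm.pow_apply_eq_add_of_apply_eq_add_one hec, sub_add_cancel] at this

theorem hasInducedC5_or_exists_isSkewPartition_of_fixed_point (hτ : IsAntimorphism G τ)
    {a b c d x : V} (hnodup : [a, b, c, d, x].Nodup)
    (h1 : τ a = b) (h2 : τ b = c) (h3 : τ c = d) (h4 : τ d = a) (hx : τ x = x)
    (hcover : ({a, b, c, d, x} : Set V) = Set.univ) :
    HasInducedC5 G ∨ ∃ A B C D : Set V, IsSkewPartition G A B C D := by
  have hne := hnodup
  simp only [List.nodup_cons, List.mem_cons, List.not_mem_nil, or_false, List.nodup_nil,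
    and_true, not_or] at hne
  obtain ⟨⟨hab, hac, -, hax⟩, ⟨hbc, -, hbx⟩, ⟨hcd, hcx⟩, -⟩ := hne
  have hab' : G.Adj a b ↔ ¬ G.Adj b c := by simpa [h1, h2] using hτ a b hab
  have hbc' : G.Adj b c ↔ ¬ G.Adj c d := by simpa [h2, h3] using hτ b c hbc
  have hcd' : G.Adj c d ↔ ¬ G.Adj d a := by simpa [h3, h4] using hτ c d hcd
  have hac' : G.Adj a c ↔ ¬ G.Adj b d := by simpa [h1, h3] using hτ a c hac
  have hax' : G.Adj a x ↔ ¬ G.Adj b x := by simpa [h1, hx] using hτ a x hax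
  have hbx' : G.Adj b x ↔ ¬ G.Adj c x := by simpa [h2, hx] using hτ b x hbx
  have hcx' : G.Adj c x ↔ ¬ G.Adj d x := by simpa [h3, hx] using hτ c x hcx
  by_cases Q : G.Adj a c <;> by_cases R : G.Adj a x
  · exact .inr ⟨_, _, _, _, isSkewPartition_singletons (by grind) (hac'.mp Q) Q R
      (by rw [← hcover]; grind)⟩
  · by_cases P : G.Adj a b
    · refine .inl (hasInducedC5_of_adj (v₀ := b) (v₁ := a) (v₂ := c) (v₃ := d) (v₄ := x)
        ?_ ?_ ?_ ?_ ?_ ?_ ?_ ?_ ?_ ?_ ?_) <;> grind [SimpleGraph.adj_comm]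
    · refine .inl (hasInducedC5_of_adj (v₀ := a) (v₁ := c) (v₂ := b) (v₃ := x) (v₄ := d)
        ?_ ?_ ?_ ?_ ?_ ?_ ?_ ?_ ?_ ?_ ?_) <;> grind [SimpleGraph.adj_comm]
  · by_cases P : G.Adj a b
    · refine .inl (hasInducedC5_of_adj (v₀ := a) (v₁ := b) (v₂ := d) (v₃ := c) (v₄ := x)
        ?_ ?_ ?_ ?_ ?_ ?_ ?_ ?_ ?_ ?_ ?_) <;> grind [SimpleGraph.adj_comm]
    · refine .inl (hasInducedC5_of_adj (v₀ := a) (v₁ := d) (v₂ := b) (v₃ := c) (v₄ := x)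
        ?_ ?_ ?_ ?_ ?_ ?_ ?_ ?_ ?_ ?_ ?_) <;> grind [SimpleGraph.adj_comm]
  · exact .inr ⟨_, _, _, _, isSkewPartition_singletons (by grind) Q
      (not_not.mp (mt hac'.mpr Q)) (not_not.mp (mt hax'.mpr R)) (by rw [← hcover]; grind)⟩

theorem exists_skew_or_symmetric_of_even_cycle (hτ : IsAntimorphism G τ) {a b c d : V}
    (habcd : [a, b, c, d].Nodup) (h1 : τ a = b) (h2 : τ b = c) (h3 : τ c = d) (h4 : τ d = a)
    {m : ℕ} (hm : Even m) {e : ZMod m → V} (he : Injective e) (hec : ∀ i, τ (e i) = e (i + 1))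
    (hdisj : ∀ i, e i ∉ ({a, b, c, d} : Set V))
    (hcover : ∀ v : V, v ∈ ({a, b, c, d} : Set V) ∨ v ∈ Set.range e) :
    (∃ A B C D : Set V, IsSkewPartition G A B C D) ∨
      ∃ A B C D : Set V, IsSymmetricPartition G A B C D := by
  have hne := habcd
  simp only [List.nodup_cons, List.mem_cons, List.not_mem_nil, or_false, List.nodup_nil,
    and_true, not_or] at hne
  obtain ⟨⟨hab, -, -⟩, ⟨hbc, -⟩, hcd, -⟩ := hne
  have key := hτ.adj_pow_apply_iff hec (y := a) fun ⟨i, hi⟩ => hdisj i (by simp [hi])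
  have hb : ∀ i, G.Adj b (e i) ↔ ¬ G.Adj a (e (i - 1)) := fun i => by
    simpa [h1] using key 1 i
  have hc : ∀ i, G.Adj c (e i) ↔ G.Adj a (e (i - 2)) := fun i => by
    simpa [sq, h1, h2] using key 2 i
  have hd : ∀ i, G.Adj d (e i) ↔ ¬ G.Adj a (e (i - 3)) := fun i => by
    simpa [pow_succ, h1, h2, h3, Nat.even_iff] using key 3 i
  have hper : Periodic (fun i => G.Adj a (e i)) 4 := fun i => propext <| by
    simpa [pow_succ, h1, h2, h3, h4, Nat.even_iff] using key 4 (i + 4)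
  by_cases hflip : ∃ i₀, (G.Adj a (e (i₀ + 2)) ↔ G.Adj a (e i₀))
  · obtain ⟨i₀, h₀⟩ := hflip
    exact .inl <| exists_isSkewPartition_of_adj_const_on_even habcd hm he hdisj hcover hb hc hd
      fun i hi => iff_of_eq (hper.eq_of_even_sub (propext h₀) hi)
  · exact .inr <| exists_isSymmetricPartition_of_adj_flip habcd
      (by simpa [h1, h2] using hτ a b hab) (by simpa [h2, h3] using hτ b c hbc)
      (by simpa [h3, h4] using hτ c d hcd) hcover hb hc hd (not_exists.mp hflip)

end IsAntimorphism

theorem main_theorem_general {V : Type*} (G : SimpleGraph V) (τ : Equiv.Perm V)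
    (hτ : IsAntimorphism G τ)
    (a b c d : V) (habcd : [a, b, c, d].Nodup)
    (h1 : τ a = b) (h2 : τ b = c) (h3 : τ c = d) (h4 : τ d = a)
    (m : ℕ) (e : ZMod m → V) (he : Function.Injective e)
    (hec : ∀ i, τ (e i) = e (i + 1))
    (hdisj : ∀ i, e i ∉ ({a, b, c, d} : Set V))
    (hcover : ∀ v : V, v ∈ ({a, b, c, d} : Set V) ∨ v ∈ Set.range e) :
    HasInducedC5 G ∨ (∃ A B C D : Set V, IsSkewPartition G A B C D) ∨
      (∃ A B C D : Set V, IsSymmetricPartition G A B C D) := by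
  rcases eq_or_ne m 1 with rfl | hm
  · have he₀ : ∀ i : ZMod 1, e i = e 0 := fun i => congrArg e (Subsingleton.elim i 0)
    refine (hτ.hasInducedC5_or_exists_isSkewPartition_of_fixed_point (x := e 0) ?_
      h1 h2 h3 h4 (by rw [hec, he₀]) ?_).imp_right .inl
    · have := hdisj 0
      grind
    · refine Set.eq_univ_of_forall fun v => ?_
      rcases hcover v with hv | ⟨i, rfl⟩
      · grind
      · simp [he₀ i]
  · exact .inr (hτ.exists_skew_or_symmetric_of_even_cycle habcd h1 h2 h3 h4
      (hτ.even_of_cycle he hec hm) he hec hdisj hcover)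

/-- A self-complementary graph whose antimorphism is the product of exactly two cycles,
one of them of length 4, has an induced `C₅`, a skew partition or a symmetric partition. -/
theorem main_theorem {V : Type*} (G : SimpleGraph V) (τ : Equiv.Perm V)
    (hτ : IsAntimorphism G τ)
    (a b c d : V) (habcd : [a, b, c, d].Nodup)
    (h1 : τ a = b) (h2 : τ b = c) (h3 : τ c = d) (h4 : τ d = a)
    (m : ℕ) (hm : 1 ≤ m) (e : ZMod m → V) (he : Function.Injective e)
    (hec : ∀ i, τ (e i) = e (i + 1))
    (hdisj : ∀ i, e i ∉ ({a, b, c, d} : Set V))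
    (hcover : ∀ v : V, v ∈ ({a, b, c, d} : Set V) ∨ v ∈ Set.range e) :
    HasInducedC5 G ∨ (∃ A B C D : Set V, IsSkewPartition G A B C D) ∨
      (∃ A B C D : Set V, IsSymmetricPartition G A B C D) :=
  main_theorem_general G τ hτ a b c d habcd h1 h2 h3 h4 m e he hec hdisj hcover
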